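/- Let A be a skew PBW extension of R. Define F_0(A) = R and, for m ≥ 1, F_m(A) = {f ∈ A : deg(f) ≤ m}, where the degree of a nonzero element is the maximal total degree of a standard monomial appearing in its (unique) representation over the left R-basis of standard monomials. Then {F_m(A)} is an increasing ring filtration of A: F_m(A) ⊆ F_{m+1}(A), 1 ∈ F_0(A), ⋃_m F_m(A) = A, and F_n(A)·F_m(A) ⊆ F_{n+m}(A) for all n,m ≥ 0. -/

import Mathlib

/-!
`F m` is the set of left `R`-combinations of standard monomials of degree `≤ m`, so
`F N · F M ⊆ F (N + M)` follows once right multiplication by a scalar preserves each `F d` and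
right multiplication by a variable maps `F d` into `F (d + 1)`: multiply by the coefficient,
then by the variables of the monomial one at a time. These two facts are proved together by
induction on `d`. A monomial of degree `d + 1` is `x^α' x_j` with `x_j` its last variable; the
relations `x_j r = c_{j,r} x_j + s` and `x_j x_i = c_{i,j} x_i x_j + (terms of degree ≤ 1)`
bring everything down to degree `d`, except the product `(x^α' c_{i,j} x_i) x_j` arising when
`i < j`, which is handled by downward induction on `i`.
-/

open scoped BigOperators

/-- The ordered standard monomial `x₁^{α₁} ⋯ xₙ^{αₙ}`. -/
def monom {A : Type*} [Monoid A] {n : ℕ} (x : Fin n → A) (α : Fin n → ℕ) : A :=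
  (List.ofFn fun i => x i ^ α i).prod

/-- `A` is a free left `R`-module (via the embedding `φ`) with basis the standard monomials:
every element has a unique representation as a finite left `R`-linear combination of the
standard monomials. -/
def IsPBWBasis {R A : Type*} [Ring R] [Ring A] {n : ℕ} (φ : R →+* A) (x : Fin n → A) : Prop :=
  ∀ a : A, ∃! c : (Fin n → ℕ) →₀ R, a = c.sum fun α r => φ r * monom x α

/-- A skew PBW extension `A` of `R` (Definition 2.1), with the defining constants
`cR i r` (for `r ≠ 0`) and `cC i j` recorded as data. -/
structure SkewPBW (R A : Type*) [Ring R] [Ring A] (n : ℕ) where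
  /-- the inclusion `R ⊆ A` -/
  φ : R →+* A
  inj : Function.Injective φ
  /-- the variables `x₁, …, xₙ` -/
  x : Fin n → A
  /-- (ii): `A` is a free left `R`-module with basis the standard monomials -/
  basis : IsPBWBasis φ x
  cR : Fin n → R → R
  cR_ne : ∀ i (r : R), r ≠ 0 → cR i r ≠ 0
  /-- (iii): `xᵢ r − c_{i,r} xᵢ ∈ R` -/
  hR : ∀ i (r : R), r ≠ 0 → ∃ s : R, x i * φ r - φ (cR i r) * x i = φ s
  cC : Fin n → Fin n → R
  cC_ne : ∀ i j, cC i j ≠ 0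
  /-- (iv): `xⱼ xᵢ − c_{i,j} xᵢ xⱼ ∈ R + Rx₁ + ⋯ + Rxₙ` -/
  hC : ∀ i j, ∃ (r0 : R) (r : Fin n → R),
    x j * x i - φ (cC i j) * (x i * x j) = φ r0 + ∑ t, φ (r t) * x t

/-- The degree filtration of a skew PBW extension: `F m` is the set of elements whose unique
representation over the left `R`-basis of standard monomials only involves monomials of total
degree `≤ m`.  (For `m = 0` this is exactly `R`.) -/
def degFiltration {R A : Type*} [Ring R] [Ring A] {n : ℕ} (φ : R →+* A) (x : Fin n → A)
    (m : ℕ) : Set A :=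
  {a : A | ∃ c : (Fin n → ℕ) →₀ R, (∀ α ∈ c.support, (∑ i, α i) ≤ m) ∧
    a = c.sum fun α r => φ r * monom x α}

section Monom

variable {A : Type*} [Monoid A]

@[simp]
lemma monom_zero {n : ℕ} (x : Fin n → A) : monom x 0 = 1 :=
  List.prod_eq_one fun _ hy => by
    obtain ⟨k, rfl⟩ := List.mem_ofFn.mp hy
    exact pow_zero _

lemma monom_succ {n : ℕ} (x : Fin (n + 1) → A) (α : Fin (n + 1) → ℕ) :
    monom x α = monom (fun i => x i.castSucc) (fun i => α i.castSucc) *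
      x (Fin.last n) ^ α (Fin.last n) := by
  rw [monom, monom, List.ofFn_succ', List.concat_eq_append, List.prod_append,
    List.prod_singleton]

lemma monom_mul_of_forall_lt_eq_zero {n : ℕ} (x : Fin n → A) (α : Fin n → ℕ) (j : Fin n)
    (hα : ∀ k, j < k → α k = 0) : monom x α * x j = monom x (α + Pi.single j 1) := by
  induction n with
  | zero => exact j.elim0
  | succ n ih =>
    rw [monom_succ, monom_succ x (α + _)]
    induction j using Fin.lastCases with
    | last => simp [pow_succ, mul_assoc]
    | cast j =>
      have hlast : α (Fin.last n) = 0 := hα _ (Fin.castSucc_lt_last j)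
      have hlast' : (α + Pi.single j.castSucc 1 : Fin (n + 1) → ℕ) (Fin.last n) = 0 := by
        simp [hlast, (Fin.castSucc_lt_last j).ne']
      have hinit : (fun i => (α + Pi.single j.castSucc 1 : Fin (n + 1) → ℕ) i.castSucc) =
          (fun i => α i.castSucc) + Pi.single j 1 := by
        funext i
        simp [Pi.single_apply]
      rw [hlast, hlast', hinit, pow_zero, mul_one, mul_one]
      exact ih _ _ _ fun k hk => hα _ (Fin.castSucc_lt_castSucc_iff.mpr hk)

@[simp]
lemma monom_single {n : ℕ} (x : Fin n → A) (i : Fin n) : monom x (Pi.single i 1) = x i := by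
  simpa using (monom_mul_of_forall_lt_eq_zero x 0 i fun _ _ => rfl).symm

lemma exists_monom_eq_monom_mul {n : ℕ} (x : Fin n → A) {α : Fin n → ℕ} {k : Fin n}
    (hk : α k ≠ 0) : ∃ (j : Fin n) (α' : Fin n → ℕ), k ≤ j ∧ (∑ i, α' i) + 1 = ∑ i, α i ∧
      monom x α = monom x α' * x j := by
  classical
  obtain ⟨j, hj, hjmax⟩ := (Finset.univ.filter fun i => α i ≠ 0).exists_max_image id
    ⟨k, by simpa using hk⟩
  simp only [Finset.mem_filter, Finset.mem_univ, true_and, id] at hj hjmax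
  have hle : Pi.single j 1 ≤ α := fun i => by
    by_cases h : i = j <;> simp [h, Nat.one_le_iff_ne_zero.mpr hj]
  have hsplit : α - Pi.single j 1 + Pi.single j 1 = α := tsub_add_cancel_of_le hle
  refine ⟨j, α - Pi.single j 1, hjmax k hk, ?_, ?_⟩
  · conv_rhs => rw [← hsplit]
    simp [Finset.sum_add_distrib]
  · rw [monom_mul_of_forall_lt_eq_zero, hsplit]
    intro i hi
    have : α i = 0 := by_contra fun h => (hjmax i h).not_gt hi
    simp [this]

lemma mul_monom_mem {n : ℕ} (S : ℕ → Set A) (x : Fin n → A)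
    (hS : ∀ m i, ∀ a ∈ S m, a * x i ∈ S (m + 1)) (β : Fin n → ℕ) {m : ℕ} {a : A}
    (ha : a ∈ S m) : a * monom x β ∈ S (m + ∑ i, β i) := by
  induction n generalizing m a with
  | zero => simpa [monom] using ha
  | succ n ih =>
    have hpow : ∀ k, ∀ {m} {a}, a ∈ S m → a * x (Fin.last n) ^ k ∈ S (m + k) := by
      intro k
      induction k with
      | zero => exact fun ha => by simpa using ha
      | succ k ihk =>
        intro m a ha
        rw [pow_succ, ← mul_assoc, ← add_assoc]
        exact hS _ _ _ (ihk ha)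
    rw [monom_succ, ← mul_assoc, Fin.sum_univ_castSucc, ← add_assoc]
    exact hpow _ (ih (fun i => x i.castSucc) (fun m i => hS m i.castSucc) _ ha)

end Monom

namespace degFiltration

variable {R A : Type*} [Ring R] [Ring A] {n : ℕ} {φ : R →+* A} {x : Fin n → A}

lemma mono {m m' : ℕ} (h : m ≤ m') : degFiltration φ x m ⊆ degFiltration φ x m' := by
  rintro a ⟨c, hc, rfl⟩
  exact ⟨c, fun α hα => (hc α hα).trans h, rfl⟩

lemma map_mul_monom_mem {m : ℕ} (r : R) {α : Fin n → ℕ} (hα : ∑ i, α i ≤ m) :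
    φ r * monom x α ∈ degFiltration φ x m := by
  refine ⟨Finsupp.single α r, fun β hβ => ?_, by simp⟩
  rwa [Finset.mem_singleton.mp (Finsupp.support_single_subset hβ)]

lemma monom_mem {m : ℕ} {α : Fin n → ℕ} (hα : ∑ i, α i ≤ m) :
    monom x α ∈ degFiltration φ x m := by
  simpa using map_mul_monom_mem (φ := φ) 1 hα

lemma zero_mem (m : ℕ) : (0 : A) ∈ degFiltration φ x m :=
  ⟨0, by simp, by simp⟩

lemma add_mem {m : ℕ} {a b : A} (ha : a ∈ degFiltration φ x m)
    (hb : b ∈ degFiltration φ x m) : a + b ∈ degFiltration φ x m := by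
  classical
  obtain ⟨c, hc, rfl⟩ := ha
  obtain ⟨c', hc', rfl⟩ := hb
  refine ⟨c + c', fun α hα => ?_, ?_⟩
  · rcases Finset.mem_union.mp (Finsupp.support_add hα) with h | h
    exacts [hc α h, hc' α h]
  · rw [Finsupp.sum_add_index' (fun _ => by simp) fun _ _ _ => by rw [map_add, add_mul]]

lemma sum_mem {m : ℕ} {ι : Type*} {s : Finset ι} {f : ι → A}
    (h : ∀ i ∈ s, f i ∈ degFiltration φ x m) : ∑ i ∈ s, f i ∈ degFiltration φ x m :=
  Finset.sum_induction f _ (fun _ _ => add_mem) (zero_mem m) h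

lemma induction_on {m : ℕ} {P : A → Prop} (zero : P 0) (add : ∀ a b, P a → P b → P (a + b))
    (map_mul_monom : ∀ (r : R) (α : Fin n → ℕ), ∑ i, α i ≤ m → P (φ r * monom x α)) {a : A}
    (ha : a ∈ degFiltration φ x m) : P a := by
  obtain ⟨c, hc, rfl⟩ := ha
  exact Finset.sum_induction _ P add zero fun α hα => map_mul_monom _ _ (hc α hα)

lemma map_mul_mem {m : ℕ} (r : R) {a : A} (ha : a ∈ degFiltration φ x m) :
    φ r * a ∈ degFiltration φ x m :=
  induction_on (P := fun a => φ r * a ∈ degFiltration φ x m)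
    (by rw [mul_zero]; exact zero_mem m) (fun _ _ h h' => by simpa [mul_add] using add_mem h h')
    (fun s α hα => by simpa [mul_assoc] using map_mul_monom_mem (φ := φ) (x := x) (r * s) hα) ha

lemma mul_mem_of_forall_monom_mul_mem {m k : ℕ} {g : A}
    (H : ∀ α : Fin n → ℕ, ∑ i, α i ≤ m → monom x α * g ∈ degFiltration φ x k) {a : A}
    (ha : a ∈ degFiltration φ x m) : a * g ∈ degFiltration φ x k :=
  induction_on (P := fun a => a * g ∈ degFiltration φ x k)
    (by rw [zero_mul]; exact zero_mem k) (fun _ _ h h' => by simpa [add_mul] using add_mem h h')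
    (fun r α hα => by simpa [mul_assoc] using map_mul_mem r (H α hα)) ha

lemma zero_eq_range : degFiltration φ x 0 = Set.range φ := by
  refine subset_antisymm (fun a ha => ?_) ?_
  · refine induction_on (φ := φ) (x := x) ⟨0, map_zero φ⟩ ?_ (fun r α hα => ⟨r, ?_⟩) ha
    · rintro _ _ ⟨r, rfl⟩ ⟨s, rfl⟩
      exact ⟨r + s, map_add φ r s⟩
    · obtain rfl : α = 0 := funext fun i => by simp_all
      simp
  · rintro _ ⟨r, rfl⟩
    simpa using map_mul_monom_mem (x := x) r (α := 0) le_rfl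

lemma iUnion_eq_univ (hx : IsPBWBasis φ x) : ⋃ m, degFiltration φ x m = Set.univ := by
  refine Set.eq_univ_of_forall fun a => Set.mem_iUnion.mpr ?_
  obtain ⟨c, hc, -⟩ := hx a
  exact ⟨c.support.sup fun α => ∑ i, α i, c, fun α hα => Finset.le_sup hα, hc⟩

lemma mul_map_mem_zero {a : A} (r : R) (ha : a ∈ degFiltration φ x 0) :
    a * φ r ∈ degFiltration φ x 0 := by
  rw [zero_eq_range] at ha ⊢
  obtain ⟨s, rfl⟩ := ha
  exact ⟨s * r, map_mul φ s r⟩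

lemma mul_var_mem_one {a : A} (i : Fin n) (ha : a ∈ degFiltration φ x 0) :
    a * x i ∈ degFiltration φ x 1 := by
  rw [zero_eq_range] at ha
  obtain ⟨s, rfl⟩ := ha
  simpa using map_mul_monom_mem (x := x) s (α := Pi.single i 1) (by simp)

end degFiltration

namespace SkewPBW

open degFiltration (mono monom_mem map_mul_monom_mem induction_on mul_mem_of_forall_monom_mul_mem)

variable {R A : Type*} [Ring R] [Ring A] {n : ℕ}

lemma mul_map_mem_succ {E : SkewPBW R A n} {d : ℕ}
    (hφ : ∀ (r : R), ∀ a ∈ degFiltration E.φ E.x d, a * E.φ r ∈ degFiltration E.φ E.x d)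
    (hx : ∀ i, ∀ a ∈ degFiltration E.φ E.x d, a * E.x i ∈ degFiltration E.φ E.x (d + 1))
    (r : R) {a : A} (ha : a ∈ degFiltration E.φ E.x (d + 1)) :
    a * E.φ r ∈ degFiltration E.φ E.x (d + 1) := by
  rcases eq_or_ne r 0 with rfl | hr
  · simpa using degFiltration.zero_mem _
  refine mul_mem_of_forall_monom_mul_mem (fun α hα => ?_) ha
  rcases eq_or_ne α 0 with rfl | hα0
  · simpa using map_mul_monom_mem (x := E.x) r (α := 0) (by simp)
  obtain ⟨k, hk⟩ := Function.ne_iff.mp hα0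
  obtain ⟨j, α', -, hdeg, hmon⟩ := exists_monom_eq_monom_mul E.x hk
  have hα' : monom E.x α' ∈ degFiltration E.φ E.x d := monom_mem (by omega)
  obtain ⟨s, hs⟩ := E.hR j r hr
  have key : monom E.x α * E.φ r =
      monom E.x α' * E.φ (E.cR j r) * E.x j + monom E.x α' * E.φ s := by
    rw [hmon, ← hs]
    noncomm_ring
  rw [key]
  exact degFiltration.add_mem (hx j _ (hφ _ _ hα')) (mono d.le_succ (hφ s _ hα'))

lemma mul_var_mem_succ {E : SkewPBW R A n} {d : ℕ}
    (hφ : ∀ (r : R), ∀ a ∈ degFiltration E.φ E.x d, a * E.φ r ∈ degFiltration E.φ E.x d)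
    (hx : ∀ i, ∀ a ∈ degFiltration E.φ E.x d, a * E.x i ∈ degFiltration E.φ E.x (d + 1))
    (i : Fin n) {a : A} (ha : a ∈ degFiltration E.φ E.x (d + 1)) :
    a * E.x i ∈ degFiltration E.φ E.x (d + 2) := by
  induction i using WellFoundedGT.induction generalizing a with
  | _ i ih =>
    refine mul_mem_of_forall_monom_mul_mem (fun α hα => ?_) ha
    by_cases hlast : ∀ k, i < k → α k = 0
    · rw [monom_mul_of_forall_lt_eq_zero _ _ _ hlast]
      exact monom_mem (by simp [Finset.sum_add_distrib]; omega)
    push Not at hlast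
    obtain ⟨k, hik, hk⟩ := hlast
    obtain ⟨j, α', hkj, hdeg, hmon⟩ := exists_monom_eq_monom_mul E.x hk
    have hα' : monom E.x α' ∈ degFiltration E.φ E.x d := monom_mem (by omega)
    obtain ⟨r₀, r, hC⟩ := E.hC i j
    have key : monom E.x α * E.x i =
        monom E.x α' * E.φ (E.cC i j) * E.x i * E.x j +
          (monom E.x α' * E.φ r₀ + ∑ t, monom E.x α' * E.φ (r t) * E.x t) := by
      rw [hmon, mul_assoc,
        ← sub_add_cancel (E.x j * E.x i) (E.φ (E.cC i j) * (E.x i * E.x j)), hC]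
      simp only [mul_add, Finset.mul_sum, mul_assoc]
      abel
    rw [key]
    refine degFiltration.add_mem (ih j (hik.trans_le hkj) (hx i _ (hφ _ _ hα')))
      (degFiltration.add_mem (mono (by omega) (hφ r₀ _ hα')) (degFiltration.sum_mem ?_))
    exact fun t _ => mono (by omega) (hx t _ (hφ _ _ hα'))

lemma mul_map_mem_and_mul_var_mem (E : SkewPBW R A n) (d : ℕ) :
    (∀ r : R, ∀ a ∈ degFiltration E.φ E.x d, a * E.φ r ∈ degFiltration E.φ E.x d) ∧
    (∀ i, ∀ a ∈ degFiltration E.φ E.x d, a * E.x i ∈ degFiltration E.φ E.x (d + 1)) := by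
  induction d with
  | zero =>
    exact ⟨fun r _ => degFiltration.mul_map_mem_zero r,
      fun i _ => degFiltration.mul_var_mem_one i⟩
  | succ d ih =>
    exact ⟨fun r _ => mul_map_mem_succ ih.1 ih.2 r, fun i _ => mul_var_mem_succ ih.1 ih.2 i⟩

lemma mul_mem (E : SkewPBW R A n) {N M : ℕ} {a b : A} (ha : a ∈ degFiltration E.φ E.x N)
    (hb : b ∈ degFiltration E.φ E.x M) : a * b ∈ degFiltration E.φ E.x (N + M) := by
  refine induction_on (P := fun b => a * b ∈ degFiltration E.φ E.x (N + M))
    (by rw [mul_zero]; exact degFiltration.zero_mem _)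
    (fun b b' h h' => by rw [mul_add]; exact degFiltration.add_mem h h') (fun r β hβ => ?_) hb
  have haφ : a * E.φ r ∈ degFiltration E.φ E.x N := (E.mul_map_mem_and_mul_var_mem N).1 r a ha
  rw [← mul_assoc]
  exact mono (by omega) <| mul_monom_mem (degFiltration E.φ E.x) E.x
    (fun m i => (E.mul_map_mem_and_mul_var_mem m).2 i) β haφ

end SkewPBW

/-- **Theorem 2.5 (filtration part).**  Let `A` be a skew PBW extension of `R` and let
`F m = degFiltration` be the degree filtration (so `F 0 = R`).  Then `F` is an increasing
ring filtration of `A`: it is increasing, `1 ∈ F 0`, `F 0 = R`, `⋃ m, F m = A`, and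
`F n · F m ⊆ F (n + m)`. -/
theorem skewPBW_degFiltration_is_filtration {R A : Type*} [Ring R] [Ring A] {n : ℕ}
    (E : SkewPBW R A n) :
    (∀ m : ℕ, degFiltration E.φ E.x m ⊆ degFiltration E.φ E.x (m + 1)) ∧
    (1 : A) ∈ degFiltration E.φ E.x 0 ∧
    degFiltration E.φ E.x 0 = Set.range E.φ ∧
    (⋃ m : ℕ, degFiltration E.φ E.x m) = Set.univ ∧
    (∀ (N M : ℕ) (a b : A), a ∈ degFiltration E.φ E.x N → b ∈ degFiltration E.φ E.x M →
      a * b ∈ degFiltration E.φ E.x (N + M)) := by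
  refine ⟨fun m => degFiltration.mono m.le_succ, ?_, degFiltration.zero_eq_range,
    degFiltration.iUnion_eq_univ E.basis, fun _ _ _ _ => E.mul_mem⟩
  rw [degFiltration.zero_eq_range]
  exact ⟨1, map_one E.φ⟩
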